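/- Let a ∈ C¹([0,1]) with a > 0, and f ∈ C¹([0,∞)) satisfy (f_eq) and (f_sgn). For each n ∈ ℕ let u_n be a classical solution of (P_n), and assume sup_n ‖u_n‖_{L∞(0,1)} < ∞. Set v_n := φ_n(u_n'). Then the sequence (v_n) is bounded in C¹([0,1]) (with v_n(0) = 0 and |v_n'(x)| ≤ ‖a‖_∞ · max_{[0, sup_n ‖u_n‖_∞]} |f| for all x), and hence admits a subsequence converging uniformly on [0,1] to a continuous function v ∈ C([0,1]). -/

import Mathlib

open Set MeasureTheory Filter Topology

noncomputable section

/-- `φ(s) = s / √(1+s²)`. -/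
def phi (s : ℝ) : ℝ := s / Real.sqrt (1 + s ^ 2)

/-- `φ'(s) = (1+s²)^(-3/2)`. -/
def phiD (s : ℝ) : ℝ := 1 / (Real.sqrt (1 + s ^ 2)) ^ 3

/-- the inverse of `φ`, a bijection of `(-1,1)` onto `ℝ`. -/
def phiInv (y : ℝ) : ℝ := y / Real.sqrt (1 - y ^ 2)

/-- the approximation `φₙ`: equal to `φ` on `[-n,n]`, affine outside. -/
def phiN (n : ℕ) (s : ℝ) : ℝ :=
  if (n : ℝ) < s then phi n + phiD n * (s - n)
  else if s < -(n : ℝ) then -phi n + phiD n * (s + n)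
  else phi s

/-- `Φ(s) = √(1+s²) - 1`. -/
def PhiBig (s : ℝ) : ℝ := Real.sqrt (1 + s ^ 2) - 1

/-- `Φₙ(s) = ∫₀ˢ φₙ`. -/
def PhiNBig (n : ℕ) (s : ℝ) : ℝ := ∫ t in (0:ℝ)..s, phiN n t

/-- the extension `f̂` of `f` vanishing on the negatives. -/
def fhat (f : ℝ → ℝ) (s : ℝ) : ℝ := if s < 0 then 0 else f s

/-- `F(s) = ∫_{u0}^s f`. -/
def Fprim (f : ℝ → ℝ) (u0 s : ℝ) : ℝ := ∫ t in u0..s, f t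

/-- assumption `(f_eq)`. -/
def Feq (f : ℝ → ℝ) (u0 : ℝ) : Prop := f 0 = 0 ∧ f u0 = 0

/-- assumption `(f_sgn)`. -/
def Fsgn (f : ℝ → ℝ) (u0 : ℝ) : Prop :=
  (∀ s, 0 < s → s < u0 → f s < 0) ∧ (∀ s, u0 < s → 0 < f s)

/-- the constant `C_a`. -/
def Ca (a : ℝ → ℝ) : ℝ :=
  max ((a 1 / a 0) * Real.exp (∫ x in (0:ℝ)..1, max (-deriv a x) 0 / a x))
      ((a 0 / a 1) * Real.exp (∫ x in (0:ℝ)..1, max (deriv a x) 0 / a x))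

/-- assumption `(f_ap)`, with the value `ū` made explicit. -/
def Fap (a f : ℝ → ℝ) (u0 ubar : ℝ) : Prop :=
  u0 < ubar ∧ (∫ s in u0..ubar, f s) = Ca a * ∫ s in u0..(0:ℝ), f s

/-- assumption `(f_ap)'`. -/
def Fap' (a f : ℝ → ℝ) : Prop :=
  (∫ x in (0:ℝ)..1, a x) * sSup ((fun s => max (-f s) 0) '' Ici 0) < 1

/-- classical solution of the approximated Neumann problem `(Pₙ)`. -/
def IsPnSol (a f : ℝ → ℝ) (n : ℕ) (u : ℝ → ℝ) : Prop :=
  ContDiff ℝ 2 u ∧ (∀ x ∈ Ioo (0:ℝ) 1, 0 < u x) ∧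
  deriv u 0 = 0 ∧ deriv u 1 = 0 ∧
  ∀ x ∈ Ioo (0:ℝ) 1, -deriv (fun y => phiN n (deriv u y)) x = a x * f (u x)

/-- classical solution of the prescribed mean curvature Neumann problem `(P)`. -/
def IsPSol (a f : ℝ → ℝ) (u : ℝ → ℝ) : Prop :=
  ContDiff ℝ 2 u ∧ (∀ x ∈ Ioo (0:ℝ) 1, 0 < u x) ∧
  deriv u 0 = 0 ∧ deriv u 1 = 0 ∧
  ∀ x ∈ Ioo (0:ℝ) 1, -deriv (fun y => phi (deriv u y)) x = a x * f (u x)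

/-- solution of the Cauchy problem with initial datum `d`. -/
def IsCauchySol (a f : ℝ → ℝ) (n : ℕ) (d : ℝ) (u : ℝ → ℝ) : Prop :=
  ContDiff ℝ 2 u ∧ u 0 = d ∧ deriv u 0 = 0 ∧
  ∀ x ∈ Ioo (0:ℝ) 1, -deriv (fun y => phiN n (deriv u y)) x = a x * fhat f (u x)

/-- `θ` is a (clockwise) angular variable for `(u - u0, φₙ(u'))` around `(u0,0)`. -/
def IsAngle (n : ℕ) (u0 : ℝ) (u θ : ℝ → ℝ) : Prop :=
  ContinuousOn θ (Icc 0 1) ∧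
  ∀ x ∈ Icc (0:ℝ) 1,
    u x - u0 = Real.sqrt ((u x - u0) ^ 2 + phiN n (deriv u x) ^ 2) * Real.cos (θ x) ∧
    phiN n (deriv u x) = -(Real.sqrt ((u x - u0) ^ 2 + phiN n (deriv u x) ^ 2) * Real.sin (θ x))

/-- non-constant on `(0,1)`. -/
def Nonconstant (u : ℝ → ℝ) : Prop := ∃ x ∈ Ioo (0:ℝ) 1, ∃ y ∈ Ioo (0:ℝ) 1, u x ≠ u y

/-- the set of points of `(0,1)` where `u` takes the value `u0`. -/
def zeroSet (u : ℝ → ℝ) (u0 : ℝ) : Set ℝ := {x | x ∈ Ioo (0:ℝ) 1 ∧ u x = u0}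

/-- the hypothesis `f'(u0) > λ_{k+1}`: there is `λ̄ < f'(u0)` admitting a nontrivial Neumann
eigenfunction of `-w'' = λ̄ a w` with exactly `k` zeros in `(0,1)`. -/
def EigenHyp (a f : ℝ → ℝ) (u0 : ℝ) (k : ℕ) : Prop :=
  ∃ lam : ℝ, ∃ w : ℝ → ℝ, lam < deriv f u0 ∧ ContDiff ℝ 2 w ∧
    (∃ x ∈ Icc (0:ℝ) 1, w x ≠ 0) ∧
    (∀ x ∈ Ioo (0:ℝ) 1, -deriv (deriv w) x = lam * a x * w x) ∧
    deriv w 0 = 0 ∧ deriv w 1 = 0 ∧ (zeroSet w 0).ncard = k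

/-- the functional `J(v) = ∫₀¹ √(1+|Dv|²)`. -/
def Jfun (v : ℝ → ℝ) : ℝ :=
  sSup { r : ℝ | ∃ w₁ w₂ : ℝ → ℝ, ContDiff ℝ 1 w₁ ∧ ContDiff ℝ 1 w₂ ∧
    tsupport w₁ ⊆ Ioo 0 1 ∧ tsupport w₂ ⊆ Ioo 0 1 ∧
    (∀ x, w₁ x ^ 2 + w₂ x ^ 2 ≤ 1) ∧
    r = ∫ x in Ioo (0:ℝ) 1, (v x * deriv w₁ x + w₂ x) }

/-- BV-solution of the Neumann problem `(P)`. -/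
def IsBVSol (a f : ℝ → ℝ) (u : ℝ → ℝ) : Prop :=
  BoundedVariationOn u (Ioo 0 1) ∧ (∀ x ∈ Ioo (0:ℝ) 1, 0 ≤ u x) ∧
  ∀ v : ℝ → ℝ, BoundedVariationOn v (Ioo 0 1) →
    Jfun u + ∫ x in Ioo (0:ℝ) 1, a x * f (u x) * (v x - u x) ≤ Jfun v

/-- `u - u0` changes sign at `z`. -/
def ChangesSign (u : ℝ → ℝ) (u0 z : ℝ) : Prop :=
  ∃ δ > (0:ℝ), ((∀ x ∈ Ioo (z - δ) z, u x < u0) ∧ (∀ x ∈ Ioo z (z + δ), u0 < u x)) ∨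
           ((∀ x ∈ Ioo (z - δ) z, u0 < u x) ∧ (∀ x ∈ Ioo z (z + δ), u x < u0))

/-- the energy `Eₙ` along a solution of `(Pₙ)`. -/
def EnergyN (a f : ℝ → ℝ) (u0 : ℝ) (n : ℕ) (u : ℝ → ℝ) (x : ℝ) : ℝ :=
  deriv u x * phiN n (deriv u x) - PhiNBig n (deriv u x) + a x * Fprim f u0 (u x)

/-- the energy `ℰ` of `u` extends to a continuous function on `[0,1]`. -/
def HasContinuousEnergy (a f : ℝ → ℝ) (u0 : ℝ) (u : ℝ → ℝ) : Prop :=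
  ∃ E : ℝ → ℝ, ContinuousOn E (Icc 0 1) ∧
    ∀ x ∈ Ioo (0:ℝ) 1, ContinuousAt u x →
      (DifferentiableAt ℝ u x →
        E x = 1 - 1 / Real.sqrt (1 + deriv u x ^ 2) + a x * Fprim f u0 (u x)) ∧
      (¬ DifferentiableAt ℝ u x → E x = 1 + a x * Fprim f u0 (u x))

/-- the oscillatory structure of the BV-solutions of Theorem 1.1: `m` generalized
intersections with `u0`, with starting sign `σ` (`σ = 1` for case (I), `σ = -1` for case (II)). -/
def OscStructure (u0 : ℝ) (u : ℝ → ℝ) (m : ℕ) (σ : ℝ) : Prop :=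
  ∃ x : ℕ → ℝ,
    x 0 = 0 ∧ x (m + 1) = 1 ∧ (∀ i ≤ m, x i < x (i + 1)) ∧
    ContDiffOn ℝ 2 u (Ico 0 (x 1)) ∧ ContDiffOn ℝ 2 u (Ioc (x m) 1) ∧
    (∀ i, 1 ≤ i → i + 1 ≤ m → ContDiffOn ℝ 2 u (Ioo (x i) (x (i + 1)))) ∧
    derivWithin u (Icc 0 1) 0 = 0 ∧ derivWithin u (Icc 0 1) 1 = 0 ∧
    (∀ i ≤ m, ∀ y ∈ Ioo (x i) (x (i + 1)), 0 < σ * (-1 : ℝ) ^ (i + 1) * (u y - u0)) ∧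
    ∀ i, 1 ≤ i → i ≤ m →
      (u (x i) = u0 ∧ ContDiffOn ℝ 2 u (Ioo (x (i - 1)) (x (i + 1)))) ∨
      (∃ L R : ℝ, Tendsto u (𝓝[<] x i) (𝓝 L) ∧ Tendsto u (𝓝[>] x i) (𝓝 R) ∧
        (0 < σ * (-1 : ℝ) ^ (i + 1) →
          L ≤ u0 ∧ u0 ≤ R ∧ Tendsto (deriv u) (𝓝[<] x i) atTop ∧
            Tendsto (deriv u) (𝓝[>] x i) atTop) ∧
        (σ * (-1 : ℝ) ^ (i + 1) < 0 →
          R ≤ u0 ∧ u0 ≤ L ∧ Tendsto (deriv u) (𝓝[<] x i) atBot ∧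
            Tendsto (deriv u) (𝓝[>] x i) atBot))

lemma sqrt_pos' (s : ℝ) : 0 < Real.sqrt (1 + s ^ 2) :=
  Real.sqrt_pos.2 (by positivity)

lemma hasDerivAt_phi (s : ℝ) : HasDerivAt phi (phiD s) s := by
  have hq : (0:ℝ) < 1 + s ^ 2 := by positivity
  have hsq := sqrt_pos' s
  have h1 : HasDerivAt (fun t : ℝ => 1 + t ^ 2) (2 * s) s := by
    simpa using ((hasDerivAt_pow 2 s).const_add 1)
  have h2 : HasDerivAt (fun t : ℝ => Real.sqrt (1 + t ^ 2))
      (s / Real.sqrt (1 + s ^ 2)) s := by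
    have := (Real.hasDerivAt_sqrt hq.ne').comp s h1
    refine this.congr_deriv ?_
    field_simp
  have hd := (hasDerivAt_id s).div h2 hsq.ne'
  have heq : phi = fun t : ℝ => t / Real.sqrt (1 + t ^ 2) := rfl
  rw [heq]
  refine hd.congr_deriv ?_
  have h3 : Real.sqrt (1 + s^2) ^ 2 = 1 + s^2 := Real.sq_sqrt hq.le
  unfold phiD
  field_simp
  simp only [id]
  nlinarith [h3, hsq]

def phiDN (n : ℕ) (s : ℝ) : ℝ := phiD (max (-(n:ℝ)) (min s (n:ℝ)))

lemma phiD_neg (t : ℝ) : phiD (-t) = phiD t := by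
  unfold phiD; rw [neg_pow]; norm_num

lemma continuous_phiD : Continuous phiD := by
  unfold phiD
  refine continuous_const.div ?_ fun s => (pow_pos (sqrt_pos' s) 3).ne'
  exact (Real.continuous_sqrt.comp (by continuity)).pow 3

lemma continuous_phiDN (n : ℕ) : Continuous (phiDN n) :=
  continuous_phiD.comp (continuous_const.max (continuous_id.min continuous_const))

lemma phiN_zero_eq : phiN 0 = id := by
  funext t
  unfold phiN phi phiD
  norm_num
  intro h1 h2
  have : t = 0 := le_antisymm h1 h2
  simp [this]

lemma hasDerivAt_phiN (n : ℕ) (s : ℝ) : HasDerivAt (phiN n) (phiDN n s) s := by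
  rcases Nat.eq_zero_or_pos n with h0 | hnpos
  · subst h0
    have h : phiDN 0 s = 1 := by
      unfold phiDN phiD
      have : max (-(0:ℕ):ℝ) (min s ((0:ℕ):ℝ)) = 0 := by
        simp only [Nat.cast_zero, neg_zero]
        rcases le_total s 0 with h | h
        · rw [min_eq_left h, max_eq_left h]
        · rw [min_eq_right h, max_self]
      rw [this]
      norm_num [Real.sqrt_one]
    rw [h, phiN_zero_eq]
    exact hasDerivAt_id s
  · have hn : (0:ℝ) < (n:ℝ) := by exact_mod_cast hnpos
    have haff : ∀ t : ℝ, HasDerivAt (fun t : ℝ => phi n + phiD n * (t - n)) (phiD n) t :=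
      fun t => by simpa using (((hasDerivAt_id t).sub_const (n:ℝ)).const_mul (phiD n)).const_add (phi n)
    have haff' : ∀ t : ℝ, HasDerivAt (fun t : ℝ => -phi n + phiD n * (t + n)) (phiD n) t :=
      fun t => by simpa using (((hasDerivAt_id t).add_const (n:ℝ)).const_mul (phiD n)).const_add (-phi n)
    have hmid : ∀ t ∈ Icc (-(n:ℝ)) (n:ℝ), phiN n t = phi t := by
      intro t ht
      unfold phiN
      rw [if_neg (not_lt.2 ht.2), if_neg (not_lt.2 ht.1)]
    have hup : ∀ t ∈ Ici (n:ℝ), phiN n t = phi n + phiD n * (t - n) := by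
      intro t ht
      rcases eq_or_lt_of_le (mem_Ici.mp ht) with h | h
      · rw [← h, hmid n ⟨by linarith, le_refl _⟩]; ring
      · unfold phiN; rw [if_pos h]
    have hlo : ∀ t ∈ Iic (-(n:ℝ)), phiN n t = -phi n + phiD n * (t + n) := by
      intro t ht
      rcases eq_or_lt_of_le (mem_Iic.mp ht) with h | h
      · rw [h, hmid (-(n:ℝ)) ⟨le_refl _, by linarith⟩]
        unfold phi phiD
        rw [neg_pow]
        norm_num
        ring
      · unfold phiN; rw [if_neg (by push_neg; linarith), if_pos h]
    rcases lt_trichotomy s (-(n:ℝ)) with hs | hs | hs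
    · -- below
      have he : phiN n =ᶠ[𝓝 s] fun t : ℝ => -phi n + phiD n * (t + n) := by
        filter_upwards [Iio_mem_nhds hs] with t ht
        exact hlo t (mem_Iic.mpr (le_of_lt ht))
      have : phiDN n s = phiD n := by
        unfold phiDN
        rw [min_eq_left (by linarith), max_eq_left (by linarith), phiD_neg]
      rw [this]
      exact (haff' s).congr_of_eventuallyEq he
    · -- glue at -n
      subst hs
      have h1 : HasDerivWithinAt (phiN n) (phiD n) (Iic (-(n:ℝ))) (-(n:ℝ)) :=
        (haff' _).hasDerivWithinAt.congr hlo (hlo _ (mem_Iic.mpr le_rfl))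
      have h2 : HasDerivWithinAt (phiN n) (phiD n) (Icc (-(n:ℝ)) (n:ℝ)) (-(n:ℝ)) := by
        have := (phiD_neg (n:ℝ)) ▸ (hasDerivAt_phi (-(n:ℝ))).hasDerivWithinAt
          (s := Icc (-(n:ℝ)) (n:ℝ))
        exact this.congr hmid (hmid _ ⟨le_refl _, by linarith⟩)
      have h3 := h1.union h2
      rw [Iic_union_Icc_eq_Iic (by linarith)] at h3
      have h4 := h3.hasDerivAt (Iic_mem_nhds (by linarith))
      have : phiDN n (-(n:ℝ)) = phiD n := by
        unfold phiDN
        rw [min_eq_left (by linarith), max_self, phiD_neg]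
      rw [this]; exact h4
    rcases lt_trichotomy s (n:ℝ) with hs' | hs' | hs'
    · -- middle
      have he : phiN n =ᶠ[𝓝 s] phi := by
        filter_upwards [Ioo_mem_nhds hs hs'] with t ht
        exact hmid t ⟨ht.1.le, ht.2.le⟩
      have : phiDN n s = phiD s := by
        unfold phiDN
        rw [min_eq_left hs'.le, max_eq_right hs.le]
      rw [this]
      exact (hasDerivAt_phi s).congr_of_eventuallyEq he
    · -- glue at n
      subst hs'
      have h1 : HasDerivWithinAt (phiN n) (phiD n) (Ici (n:ℝ)) (n:ℝ) :=
        (haff _).hasDerivWithinAt.congr hup (hup _ (mem_Ici.mpr le_rfl))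
      have h2 : HasDerivWithinAt (phiN n) (phiD n) (Icc (-(n:ℝ)) (n:ℝ)) (n:ℝ) :=
        ((hasDerivAt_phi (n:ℝ)).hasDerivWithinAt (s := Icc (-(n:ℝ)) (n:ℝ))).congr
          hmid (hmid _ ⟨by linarith, le_refl _⟩)
      have h3 := h2.union h1
      rw [Icc_union_Ici_eq_Ici (by linarith)] at h3
      have h4 := h3.hasDerivAt (Ici_mem_nhds (by linarith))
      have : phiDN n (n:ℝ) = phiD n := by
        unfold phiDN
        rw [min_self, max_eq_right (by linarith)]
      rw [this]; exact h4
    · -- above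
      have he : phiN n =ᶠ[𝓝 s] fun t : ℝ => phi n + phiD n * (t - n) := by
        filter_upwards [Ioi_mem_nhds hs'] with t ht
        exact hup t (mem_Ici.mpr (le_of_lt ht))
      have : phiDN n s = phiD n := by
        unfold phiDN
        rw [min_eq_right hs'.le, max_eq_right (by linarith)]
      rw [this]
      exact (haff s).congr_of_eventuallyEq he

lemma phiN_zero (n : ℕ) : phiN n 0 = 0 := by
  unfold phiN
  rw [if_neg (not_lt.2 (Nat.cast_nonneg n)), if_neg (not_lt.2 (neg_nonpos.2 (by positivity)))]
  unfold phi; simp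

theorem statement14 (a f : ℝ → ℝ) (u0 : ℝ)
    (ha : ContDiff ℝ 1 a) (hapos : ∀ x ∈ Icc (0:ℝ) 1, 0 < a x)
    (hf : ContDiffOn ℝ 1 f (Ici 0)) (hu0 : 0 < u0)
    (hfeq : Feq f u0) (hfsgn : Fsgn f u0)
    (us : ℕ → ℝ → ℝ) (hsol : ∀ n, IsPnSol a f n (us n))
    (M : ℝ) (hM : ∀ n, ∀ x ∈ Icc (0:ℝ) 1, |us n x| ≤ M) :
    (∀ n, phiN n (deriv (us n) 0) = 0) ∧
    (∀ n, ∀ x ∈ Icc (0:ℝ) 1,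
      |deriv (fun y => phiN n (deriv (us n) y)) x| ≤
        sSup ((fun y => |a y|) '' Icc (0:ℝ) 1) * sSup ((fun s => |f s|) '' Icc (0:ℝ) M)) ∧
    ∃ ψ : ℕ → ℕ, StrictMono ψ ∧ ∃ v : ℝ → ℝ, ContinuousOn v (Icc 0 1) ∧
      TendstoUniformlyOn (fun j x => phiN (ψ j) (deriv (us (ψ j)) x)) v atTop (Icc 0 1) := by
  have hM0 : 0 ≤ M := (abs_nonneg _).trans (hM 0 0 ⟨le_refl _, zero_le_one⟩)
  set CA := sSup ((fun y => |a y|) '' Icc (0:ℝ) 1) with hCAdef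
  set CF := sSup ((fun s => |f s|) '' Icc (0:ℝ) M) with hCFdef
  have hbddA : BddAbove ((fun y => |a y|) '' Icc (0:ℝ) 1) :=
    (isCompact_Icc.image_of_continuousOn (ha.continuous.abs.continuousOn)).bddAbove
  have hbddF : BddAbove ((fun s => |f s|) '' Icc (0:ℝ) M) :=
    (isCompact_Icc.image_of_continuousOn
      ((hf.continuousOn.mono (Icc_subset_Ici_self)).abs)).bddAbove
  have haCA : ∀ y ∈ Icc (0:ℝ) 1, |a y| ≤ CA := fun y hy =>
    le_csSup hbddA (mem_image_of_mem _ hy)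
  have hfCF : ∀ s ∈ Icc (0:ℝ) M, |f s| ≤ CF := fun s hs =>
    le_csSup hbddF (mem_image_of_mem _ hs)
  have hCA0 : 0 ≤ CA := (abs_nonneg _).trans (haCA 0 ⟨le_refl _, zero_le_one⟩)
  have hCF0 : 0 ≤ CF := (abs_nonneg _).trans (hfCF 0 ⟨le_refl _, hM0⟩)
  -- basic facts for each n
  set v : ℕ → ℝ → ℝ := fun n y => phiN n (deriv (us n) y) with hvdef
  have hder1 : ∀ n, ContDiff ℝ 1 (deriv (us n)) := by
    intro n
    have h2 : ContDiff ℝ (1 + 1) (us n) := by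
      rw [show ((1:WithTop ℕ∞) + 1) = 2 by norm_num]; exact (hsol n).1
    exact (contDiff_succ_iff_deriv.mp h2).2.2
  have hv : ∀ n x, HasDerivAt (v n) (phiDN n (deriv (us n) x) * deriv (deriv (us n)) x) x := by
    intro n x
    exact (hasDerivAt_phiN n (deriv (us n) x)).comp x
      (((hder1 n).differentiable one_ne_zero x).hasDerivAt)
  have hvderiv : ∀ n, deriv (v n) = fun x => phiDN n (deriv (us n) x) * deriv (deriv (us n)) x :=
    fun n => funext fun x => (hv n x).deriv
  have hvdcont : ∀ n, Continuous (deriv (v n)) := by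
    intro n
    rw [hvderiv n]
    exact ((continuous_phiDN n).comp ((hder1 n).continuous)).mul
      ((hder1 n).continuous_deriv le_rfl)
  -- part 1
  have part1 : ∀ n, phiN n (deriv (us n) 0) = 0 := fun n => by
    rw [(hsol n).2.2.1, phiN_zero]
  -- part 2
  have part2 : ∀ n, ∀ x ∈ Icc (0:ℝ) 1, |deriv (v n) x| ≤ CA * CF := by
    intro n
    have hsub : Ioo (0:ℝ) 1 ⊆ {x | |deriv (v n) x| ≤ CA * CF} := by
      intro x hx
      have heq := (hsol n).2.2.2.2 x hx
      have : deriv (v n) x = -(a x * f (us n x)) := by linarith [heq]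
      rw [mem_setOf_eq, this, abs_neg, abs_mul]
      have hux : us n x ∈ Icc (0:ℝ) M :=
        ⟨((hsol n).2.1 x hx).le, le_of_abs_le (hM n x (Ioo_subset_Icc_self hx))⟩
      exact mul_le_mul (haCA x (Ioo_subset_Icc_self hx)) (hfCF _ hux) (abs_nonneg _) hCA0
    have hclosed : IsClosed {x : ℝ | |deriv (v n) x| ≤ CA * CF} :=
      isClosed_le (continuous_abs.comp (hvdcont n)) continuous_const
    intro x hx
    have : Icc (0:ℝ) 1 ⊆ {x | |deriv (v n) x| ≤ CA * CF} := by
      rw [← closure_Ioo (zero_ne_one)]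
      exact closure_minimal hsub hclosed
    exact this hx
  refine ⟨part1, part2, ?_⟩
  -- part 3
  set K := (CA * CF).toNNReal with hKdef
  have hlip : ∀ n, LipschitzOnWith K (v n) (Icc 0 1) := by
    intro n
    refine (convex_Icc (0:ℝ) 1).lipschitzOnWith_of_nnnorm_deriv_le
      (fun x _ => (hv n x).differentiableAt) (fun x hx => ?_)
    rw [← NNReal.coe_le_coe, coe_nnnorm, Real.norm_eq_abs,
      Real.coe_toNNReal _ (mul_nonneg hCA0 hCF0)]
    exact part2 n x hx
  have hbnd : ∀ n, ∀ x ∈ Icc (0:ℝ) 1, |v n x| ≤ CA * CF := by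
    intro n x hx
    have h0 : (0:ℝ) ∈ Icc (0:ℝ) 1 := ⟨le_refl _, zero_le_one⟩
    have := (hlip n).dist_le_mul x hx 0 h0
    rw [Real.dist_eq] at this
    have hv0 : v n 0 = 0 := part1 n
    calc |v n x| = |v n x - v n 0| := by rw [hv0, sub_zero]
      _ ≤ K * |x - 0| := this
      _ ≤ (CA * CF) * 1 := by
          rw [hKdef, Real.coe_toNNReal _ (mul_nonneg hCA0 hCF0)]
          refine mul_le_mul_of_nonneg_left ?_ (mul_nonneg hCA0 hCF0)
          rw [sub_zero, abs_of_nonneg hx.1]; exact hx.2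
      _ = CA * CF := mul_one _
  -- Arzelà–Ascoli
  set X := Icc (0:ℝ) 1
  have hvcont : ∀ n, Continuous (v n) := fun n =>
    continuous_iff_continuousAt.mpr fun x => (hv n x).differentiableAt.continuousAt
  let Gb : ℕ → BoundedContinuousFunction ↥X ℝ := fun n =>
    BoundedContinuousFunction.mkOfCompact ⟨X.restrict (v n), (hvcont n).comp continuous_subtype_val⟩
  let A : Set (BoundedContinuousFunction ↥X ℝ) := {g | LipschitzWith K ⇑g ∧ ∀ x, |g x| ≤ CA * CF}
  have hmem : ∀ n, Gb n ∈ A := by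
    intro n
    constructor
    · exact lipschitzOnWith_iff_restrict.mp (hlip n)
    · exact fun x => hbnd n x.1 x.2
  have hequi : Equicontinuous ((↑) : A → X → ℝ) := by
    apply Metric.equicontinuous_of_continuity_modulus (fun t => (K:ℝ) * t)
    · have : Tendsto (fun t : ℝ => (K:ℝ) * t) (𝓝 0) (𝓝 ((K:ℝ) * 0)) :=
        (continuous_const.mul continuous_id).tendsto 0
      simpa using this
    · intro x y i
      exact i.2.1.dist_le_mul x y
  have hcpt : IsCompact (closure A) := by
    refine BoundedContinuousFunction.arzela_ascoli (Icc (-(CA*CF)) (CA*CF)) isCompact_Icc A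
      (fun g x hg => ?_) hequi
    exact abs_le.mp (hg.2 x)
  obtain ⟨g, -, ψ, hψ, hTend⟩ :=
    hcpt.isSeqCompact (fun n => subset_closure (hmem n))
  have hTU : TendstoUniformly (fun j => ⇑(Gb (ψ j))) (⇑g) atTop :=
    BoundedContinuousFunction.tendsto_iff_tendstoUniformly.mp hTend
  refine ⟨ψ, hψ, fun x => g (Set.projIcc 0 1 zero_le_one x), ?_, ?_⟩
  · exact (g.continuous.comp continuous_projIcc).continuousOn
  · rw [tendstoUniformlyOn_iff_tendstoUniformly_comp_coe]
    have h1 : (fun (j : ℕ) (x : X) => phiN (ψ j) (deriv (us (ψ j)) ↑x)) =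
        fun j => ⇑(Gb (ψ j)) := rfl
    have h2 : ((fun x => g (Set.projIcc 0 1 zero_le_one x)) ∘ ((↑) : X → ℝ)) = ⇑g := by
      funext x
      simp only [Function.comp_apply]
      rw [Set.projIcc_of_mem zero_le_one x.2]
    rw [h1, h2]
    exact hTU
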